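/- Let G = ⟨a, b, c⟩ be a free group of rank 3, with b_i = b^{c^i}, b_f, a_f as usual, and let ℬ ⊆ 𝓔. Let φ be the automorphism of G sending a ↦ a, b ↦ b^c, c ↦ c. Then φ(A_ℬ) = A_{σ(ℬ)}, where σ(ℬ) = {f : ∃ g ∈ ℬ, ∀ i, f(i) = g(i-1)}. Consequently, if A_ℬ is benign in G then so is A_{σ(ℬ)}. -/

import Mathlib

/-! The automorphism `φ` fixes `a` and `c` and shifts `b_i ↦ b_{i+1}`. Shifting indices preserves
their order, so `φ (b_f) = b_{f(· - 1)}` and `φ (a_f) = a_{f(· - 1)}`; hence `φ` carries the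
generators of `A_ℬ` onto those of `A_{σ(ℬ)}`, and benignity, being invariant under automorphisms,
passes from one to the other. -/

namespace Stmt18

/-- A group is finitely presented if it is isomorphic to a presented group with
finitely many generators and finitely many relators. -/
def FinitelyPresentedGroup (K : Type*) [Group K] : Prop :=
  ∃ (n : ℕ) (rels : Set (FreeGroup (Fin n))), rels.Finite ∧
    Nonempty (K ≃* PresentedGroup rels)

/-- A subgroup `H` of a group `G` is benign in `G` if `G` embeds into some finitely
presented group `K` possessing a finitely generated subgroup `L` with `G ∩ L = H`. -/
def Benign {G : Type*} [Group G] (H : Subgroup G) : Prop :=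
  ∃ (K : Type) (_ : Group K) (φ : G →* K) (L : Subgroup K),
    Function.Injective φ ∧ FinitelyPresentedGroup K ∧ L.FG ∧ L.comap φ = H

/-- `G` is the free group of rank 3 on `a`, `b`, `c`. -/
abbrev G := FreeGroup (Fin 3)

def a : G := FreeGroup.of 0
def b : G := FreeGroup.of 1
def c : G := FreeGroup.of 2

/-- `b_i = c^{-i} b c^i`. -/
def bi (i : ℤ) : G := c ^ (-i) * b * c ^ i

/-- `b_f`: the product of the `b_i^{f(i)}` in increasing order of `i`. -/
def bf (f : ℤ →₀ ℤ) : G := ((f.support.sort (· ≤ ·)).map fun i => bi i ^ f i).prod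

/-- `a_f = b_f⁻¹ a b_f`. -/
def af (f : ℤ →₀ ℤ) : G := (bf f)⁻¹ * a * bf f

/-- `A_ℬ = ⟨a_f : f ∈ ℬ⟩`. -/
def Agrp (B : Set (ℤ →₀ ℤ)) : Subgroup G := Subgroup.closure (af '' B)

/-- The Higman operation `σ`. -/
def sigma (B : Set (ℤ →₀ ℤ)) : Set (ℤ →₀ ℤ) := {f | ∃ g ∈ B, ∀ i : ℤ, f i = g (i - 1)}

/-- The automorphism `φ` of `G` sending `a ↦ a`, `b ↦ b^c`, `c ↦ c`. -/
def φm : G →* G := FreeGroup.lift ![a, c⁻¹ * b * c, c]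

theorem Benign.map_mulEquiv {G G' : Type*} [Group G] [Group G'] {H : Subgroup G}
    (e : G ≃* G') (hH : Benign H) : Benign (H.map e.toMonoidHom) := by
  obtain ⟨K, _, ι, L, hι, hK, hL, hLH⟩ := hH
  refine ⟨K, ‹_›, ι.comp e.symm.toMonoidHom, L, hι.comp e.symm.injective, hK, hL, ?_⟩
  rw [← Subgroup.comap_comap, hLH, Subgroup.map_equiv_eq_comap_symm']

theorem sort_support_embDomain {α β M : Type*} [LinearOrder α] [LinearOrder β] [Zero M]
    (e : α ↪ β) (he : StrictMono e) (f : α →₀ M) :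
    (f.embDomain e).support.sort (· ≤ ·) = (f.support.sort (· ≤ ·)).map e := by
  rw [Finsupp.support_embDomain, (he.strictMonoOn _).map_finsetSort]

noncomputable def shift (f : ℤ →₀ ℤ) : ℤ →₀ ℤ :=
  f.embDomain (Equiv.addRight 1).toEmbedding

theorem shift_apply (f : ℤ →₀ ℤ) (i : ℤ) : shift f i = f (i - 1) := by
  simpa [shift] using Finsupp.embDomain_apply_self (Equiv.addRight (1 : ℤ)).toEmbedding f (i - 1)

theorem sigma_eq_image_shift (B : Set (ℤ →₀ ℤ)) : sigma B = shift '' B := by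
  ext f
  refine ⟨fun ⟨g, hg, hf⟩ => ⟨g, hg, Finsupp.ext fun i => by rw [shift_apply, hf]⟩, ?_⟩
  rintro ⟨g, hg, rfl⟩
  exact ⟨g, hg, shift_apply g⟩

theorem sort_support_shift (f : ℤ →₀ ℤ) :
    (shift f).support.sort (· ≤ ·) = (f.support.sort (· ≤ ·)).map (· + 1) :=
  sort_support_embDomain _ (add_left_strictMono (a := (1 : ℤ))) f

theorem φm_a : φm a = a := rfl
theorem φm_b : φm b = c⁻¹ * b * c := rfl
theorem φm_c : φm c = c := rfl

def φmInv : G →* G := FreeGroup.lift ![a, c * b * c⁻¹, c]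

theorem φmInv_comp_φm : φmInv.comp φm = MonoidHom.id G := by
  ext x
  fin_cases x <;> simp [φm, φmInv, a, b, c, mul_assoc]

theorem φm_comp_φmInv : φm.comp φmInv = MonoidHom.id G := by
  ext x
  fin_cases x <;> simp [φm, φmInv, a, b, c, mul_assoc]

def φEquiv : G ≃* G := MonoidHom.toMulEquiv φm φmInv φmInv_comp_φm φm_comp_φmInv

theorem φm_bi (i : ℤ) : φm (bi i) = bi (i + 1) := by
  simp only [bi, map_mul, map_zpow, φm_b, φm_c]
  group

theorem φm_bf (f : ℤ →₀ ℤ) : φm (bf f) = bf (shift f) := by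
  simp only [bf, sort_support_shift, List.map_map, ← List.prod_hom _ φm]
  congr 1
  refine List.map_congr_left fun i _ => ?_
  simp [φm_bi, shift_apply]

theorem φm_af (f : ℤ →₀ ℤ) : φm (af f) = af (shift f) := by
  simp only [af, map_mul, map_inv, φm_bf, φm_a]

theorem map_φm_Agrp (B : Set (ℤ →₀ ℤ)) : (Agrp B).map φm = Agrp (sigma B) := by
  rw [Agrp, MonoidHom.map_closure, Agrp, sigma_eq_image_shift, Set.image_image, Set.image_image]
  simp only [φm_af]

/-- `φ` maps `A_ℬ` onto `A_{σ(ℬ)}`; consequently, if `A_ℬ` is benign in `G` then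
so is `A_{σ(ℬ)}`. -/
theorem benign_sigma (B : Set (ℤ →₀ ℤ)) :
    (Agrp B).map φm = Agrp (sigma B) ∧ (Benign (Agrp B) → Benign (Agrp (sigma B))) :=
  ⟨map_φm_Agrp B, fun h => map_φm_Agrp B ▸ h.map_mulEquiv φEquiv⟩

end Stmt18
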